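/- For every integer n ≥ 1, let the symmetric group S_{n+1} act on T_n by R-algebra automorphisms permuting the tensor factors, σ · (b₀ ⊗ ⋯ ⊗ bₙ) being the tensor whose i-th entry is b_{σ^{-1}(i)}. This action preserves the ideal J^{(2)}_{0n} and hence descends to T_n/J^{(2)}_{0n}, and for every σ ∈ S_{n+1} and every element α of the ideal Ψ^{(n)} := ∏_{i=1}^{n} J̃_{0i} of T_n/J^{(2)}_{0n}, one has σ · α = sgn(σ) · α. -/

import Mathlib

open scoped TensorProduct
open PiTensorProduct
open scoped Pointwise

noncomputable section

variable (R B : Type*) [CommRing R] [CommRing B] [Algebra R B]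

/-- The `(n+1)`-fold tensor power `B ⊗_R ⋯ ⊗_R B`, with factors indexed by `Fin (n+1)`. -/
abbrev TT (n : ℕ) : Type _ := ⨂[R] _ : Fin (n + 1), B

/-- `d^{r,s} b = (1 ⊗ ⋯ ⊗ b ⊗ ⋯ ⊗ 1) - (1 ⊗ ⋯ ⊗ b ⊗ ⋯ ⊗ 1)`, with `b` in position `s`
(resp. `r`) in the two elementary tensors. -/
def dd (n : ℕ) (r s : Fin (n + 1)) (b : B) : TT R B n :=
  tprod R (fun i => if i = s then b else 1) - tprod R (fun i => if i = r then b else 1)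

/-- The ideal `J_{rs}` generated by the elements `d^{r,s} b`. -/
def Jrs (n : ℕ) (r s : Fin (n + 1)) : Ideal (TT R B n) :=
  Ideal.span {x | ∃ b : B, x = dd R B n r s b}

/-- The ideal `J^{(2)}_{0n} = Σ_{0 ≤ r < s ≤ n} J_{rs}²`. -/
def Jsq (n : ℕ) : Ideal (TT R B n) :=
  ⨆ (r : Fin (n + 1)) (s : Fin (n + 1)) (_ : r < s), (Jrs R B n r s) ^ 2

/-- The image `J̃_{rs}` of the ideal `J_{rs}` in the quotient ring `T_n / J^{(2)}_{0n}`. -/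
def Jt (n : ℕ) (r s : Fin (n + 1)) : Ideal (TT R B n ⧸ Jsq R B n) :=
  (Jrs R B n r s).map (Ideal.Quotient.mk (Jsq R B n))

/-- The ideal `Ψ^{(n)} = ∏_{i=1}^n J̃_{0i}` of weak combinatorial `n`-forms. -/
def PsiW (n : ℕ) : Ideal (TT R B n ⧸ Jsq R B n) :=
  ∏ i ∈ Finset.Ioi (0 : Fin (n + 1)), Jt R B n 0 i

def rho (n : ℕ) (σ : Equiv.Perm (Fin (n + 1))) : TT R B n ≃ₐ[R] TT R B n :=
  AlgEquiv.ofLinearEquiv (PiTensorProduct.reindex R (fun _ => B) σ)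
    (by rw [PiTensorProduct.one_def, reindex_tprod]; rfl)
    (fun x y => by
      induction x using PiTensorProduct.induction_on with
      | smul_tprod r f =>
        induction y using PiTensorProduct.induction_on with
        | smul_tprod r' g =>
          simp only [smul_mul_smul_comm, map_smul, tprod_mul_tprod, reindex_tprod]
          rfl
        | add y₁ y₂ h1 h2 => simp only [mul_add, map_add, h1, h2]
      | add x₁ x₂ h1 h2 => simp only [add_mul, map_add, h1, h2])

lemma rho_tprod (n : ℕ) (σ : Equiv.Perm (Fin (n + 1))) (f : Fin (n + 1) → B) :
    rho R B n σ (tprod R f) = tprod R (fun i => f (σ⁻¹ i)) := by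
  simp [rho, reindex_tprod]

lemma rho_mul_apply (n : ℕ) (σ₁ σ₂ : Equiv.Perm (Fin (n + 1))) (t : TT R B n) :
    rho R B n (σ₁ * σ₂) t = rho R B n σ₁ (rho R B n σ₂ t) := by
  induction t using PiTensorProduct.induction_on with
  | smul_tprod c f =>
    have h : (fun i => f ((σ₁ * σ₂)⁻¹ i)) = fun i => f (σ₂⁻¹ (σ₁⁻¹ i)) := by
      funext i; rw [mul_inv_rev, Equiv.Perm.mul_apply]
    simp only [map_smul, rho_tprod, h]
  | add x y hx hy => simp only [map_add, hx, hy]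

lemma rho_one_apply (n : ℕ) (t : TT R B n) : rho R B n 1 t = t := by
  induction t using PiTensorProduct.induction_on with
  | smul_tprod c f =>
    have h : (fun i => f ((1 : Equiv.Perm (Fin (n+1)))⁻¹ i)) = f := by
      funext i; rw [inv_one, Equiv.Perm.one_apply]
    simp only [map_smul, rho_tprod, h]
  | add x y hx hy => simp only [map_add, hx, hy]

lemma rho_dd (n : ℕ) (σ : Equiv.Perm (Fin (n + 1))) (r s : Fin (n + 1)) (b : B) :
    rho R B n σ (dd R B n r s b) = dd R B n (σ r) (σ s) b := by
  simp only [dd, map_sub, rho_tprod]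
  congr 2 <;> funext i <;> simp only [Equiv.Perm.inv_eq_iff_eq]

lemma dd_symm (n : ℕ) (r s : Fin (n + 1)) (b : B) :
    dd R B n s r b = - dd R B n r s b := by simp [dd]

lemma dd_cocycle (n : ℕ) (r s t : Fin (n + 1)) (b : B) :
    dd R B n r s b = dd R B n t s b - dd R B n t r b := by simp [dd]

lemma dd_mem (n : ℕ) (r s : Fin (n + 1)) (b : B) : dd R B n r s b ∈ Jrs R B n r s :=
  Ideal.subset_span ⟨b, rfl⟩

lemma Jrs_comm (n : ℕ) (r s : Fin (n + 1)) : Jrs R B n r s = Jrs R B n s r := by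
  have h : ∀ a c : Fin (n + 1), Jrs R B n a c ≤ Jrs R B n c a := by
    intro a c
    rw [Jrs, Ideal.span_le]
    rintro x ⟨b, rfl⟩
    rw [show dd R B n a c b = -dd R B n c a b from by simp [dd]]
    exact neg_mem (dd_mem R B n c a b)
  exact le_antisymm (h r s) (h s r)

lemma sq_le_Jsq (n : ℕ) (r s : Fin (n + 1)) (h : r ≠ s) :
    Jrs R B n r s ^ 2 ≤ Jsq R B n := by
  rcases lt_or_gt_of_ne h with hlt | hlt
  · exact le_iSup_of_le r (le_iSup_of_le s (le_iSup_of_le hlt le_rfl))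
  · rw [Jrs_comm]
    exact le_iSup_of_le s (le_iSup_of_le r (le_iSup_of_le hlt le_rfl))

lemma mul_dd_mem_Jsq (n : ℕ) (r s : Fin (n + 1)) (h : r ≠ s) (b c : B) :
    dd R B n r s b * dd R B n r s c ∈ Jsq R B n :=
  sq_le_Jsq R B n r s h (by rw [sq]; exact Ideal.mul_mem_mul (dd_mem _ _ _ _ _ _) (dd_mem _ _ _ _ _ _))

lemma map_Jrs (n : ℕ) (σ : Equiv.Perm (Fin (n + 1))) (r s : Fin (n + 1)) :
    Ideal.map ((rho R B n σ : TT R B n →+* TT R B n)) (Jrs R B n r s)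
      ≤ Jrs R B n (σ r) (σ s) := by
  rw [Jrs, Ideal.map_span, Ideal.span_le]
  rintro x ⟨y, ⟨b, rfl⟩, rfl⟩
  exact (rho_dd R B n σ r s b : (rho R B n σ : TT R B n →+* TT R B n) (dd R B n r s b) = _)
    ▸ dd_mem R B n (σ r) (σ s) b

lemma rho_Jsq (n : ℕ) (σ : Equiv.Perm (Fin (n + 1))) :
    ∀ x ∈ Jsq R B n, rho R B n σ x ∈ Jsq R B n := by
  have hmap : Ideal.map ((rho R B n σ : TT R B n →+* TT R B n)) (Jsq R B n) ≤ Jsq R B n := by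
    rw [Jsq, Ideal.map_iSup]
    refine iSup_le fun r => ?_
    rw [Ideal.map_iSup]
    refine iSup_le fun s => ?_
    rw [Ideal.map_iSup]
    refine iSup_le fun hrs => ?_
    rw [Ideal.map_pow, sq]
    exact le_trans (Ideal.mul_mono (map_Jrs R B n σ r s) (map_Jrs R B n σ r s))
      (by rw [← sq]; exact sq_le_Jsq R B n (σ r) (σ s) (fun hc => hrs.ne (σ.injective hc)))
  intro x hx
  exact hmap (Ideal.mem_map_of_mem _ hx)
def PP (n : ℕ) : Ideal (TT R B n) := ∏ i ∈ Finset.Ioi (0 : Fin (n + 1)), Jrs R B n 0 i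

lemma J0i_mul_PP_le (n : ℕ) (i : Fin (n + 1)) (hi : i ∈ Finset.Ioi (0 : Fin (n + 1))) :
    Jrs R B n 0 i * PP R B n ≤ Jsq R B n := by
  have h0i : (0 : Fin (n + 1)) ≠ i := (Finset.mem_Ioi.mp hi).ne
  rw [PP, ← Finset.mul_prod_erase _ _ hi, ← mul_assoc, ← sq]
  exact le_trans Ideal.mul_le_left (sq_le_Jsq R B n 0 i h0i)

lemma Jrs_mul_PP_le (n : ℕ) (r s : Fin (n + 1)) (h : r ≠ s) :
    Jrs R B n r s * PP R B n ≤ Jsq R B n := by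
  by_cases hr : r = 0
  · subst hr
    exact J0i_mul_PP_le R B n s (Finset.mem_Ioi.mpr (Fin.pos_iff_ne_zero.mpr (Ne.symm h)))
  by_cases hs : s = 0
  · subst hs
    rw [Jrs_comm]
    exact J0i_mul_PP_le R B n r (Finset.mem_Ioi.mpr (Fin.pos_iff_ne_zero.mpr hr))
  have hle : Jrs R B n r s ≤ Jrs R B n 0 r ⊔ Jrs R B n 0 s := by
    rw [Jrs, Ideal.span_le]
    rintro x ⟨b, rfl⟩
    rw [dd_cocycle R B n r s 0 b]
    exact sub_mem (Ideal.mem_sup_right (dd_mem R B n 0 s b))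
      (Ideal.mem_sup_left (dd_mem R B n 0 r b))
  calc Jrs R B n r s * PP R B n
      ≤ (Jrs R B n 0 r ⊔ Jrs R B n 0 s) * PP R B n := Ideal.mul_mono_left hle
    _ = Jrs R B n 0 r * PP R B n ⊔ Jrs R B n 0 s * PP R B n := Ideal.sup_mul _ _ _
    _ ≤ Jsq R B n := sup_le
        (J0i_mul_PP_le R B n r (Finset.mem_Ioi.mpr (Fin.pos_iff_ne_zero.mpr hr)))
        (J0i_mul_PP_le R B n s (Finset.mem_Ioi.mpr (Fin.pos_iff_ne_zero.mpr hs)))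

lemma rho_swap_sub_mem (n : ℕ) (r s : Fin (n + 1)) (h : r ≠ s) (t : TT R B n) :
    rho R B n (Equiv.swap r s) t - t ∈ Jrs R B n r s := by
  induction t using PiTensorProduct.induction_on with
  | smul_tprod c f =>
    have core : rho R B n (Equiv.swap r s) (tprod R f) - tprod R f ∈ Jrs R B n r s := by
      rw [rho_tprod]
      have hinv : (Equiv.swap r s)⁻¹ = Equiv.swap r s := Equiv.swap_inv r s
      rw [hinv]
      set e : Fin (n + 1) → B → TT R B n :=
        fun j b => tprod R (fun i => if i = j then b else 1) with he
      have hdd : ∀ a : B, dd R B n r s a = e s a - e r a := fun a => rfl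
      have hgen : ∀ g : Fin (n + 1) → B, tprod R g =
          tprod R (fun i => if i = r then 1 else if i = s then 1 else g i)
            * (e r (g r) * e s (g s)) := by
        intro g
        rw [he]
        simp only [tprod_mul_tprod]
        congr 1
        funext i
        by_cases hir : i = r
        · subst hir
          simp [h]
        · by_cases his : i = s
          · subst his
            simp [hir]
          · simp [hir, his]
      have hu : (fun i => if i = r then 1 else if i = s then 1
            else f (Equiv.swap r s i)) = (fun i => if i = r then 1 else if i = s then 1 else f i) := by
        funext i
        by_cases hir : i = r
        · simp [hir]
        · by_cases his : i = s
          · simp [hir, his]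
          · simp only [if_neg hir, if_neg his]
            rw [Equiv.swap_apply_of_ne_of_ne hir his]
      have h2 : tprod R (fun i => f (Equiv.swap r s i)) =
          tprod R (fun i => if i = r then 1 else if i = s then 1 else f i)
            * (e r (f s) * e s (f r)) := by
        rw [hgen (fun i => f (Equiv.swap r s i)), hu,
          Equiv.swap_apply_left, Equiv.swap_apply_right]
      rw [h2, hgen f]
      set u : Fin (n + 1) → B := fun i => if i = r then 1 else if i = s then 1 else f i with hu'
      have hkey : tprod R u * (e r (f s) * e s (f r)) - tprod R u * (e r (f r) * e s (f s))
          = tprod R u * (e r (f s) * dd R B n r s (f r) - e r (f r) * dd R B n r s (f s)) := by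
        rw [hdd, hdd]; ring
      rw [hkey]
      exact Ideal.mul_mem_left _ _ (sub_mem
        (Ideal.mul_mem_left _ _ (dd_mem R B n r s (f r)))
        (Ideal.mul_mem_left _ _ (dd_mem R B n r s (f s))))
    have : rho R B n (Equiv.swap r s) (c • tprod R f) - c • tprod R f
        = c • (rho R B n (Equiv.swap r s) (tprod R f) - tprod R f) := by
      rw [map_smul, smul_sub]
    rw [this, Algebra.smul_def]
    exact Ideal.mul_mem_left _ _ core
  | add x y hx hy =>
    have : rho R B n (Equiv.swap r s) (x + y) - (x + y)
        = (rho R B n (Equiv.swap r s) x - x) + (rho R B n (Equiv.swap r s) y - y) := by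
      rw [map_add]; ring
    rw [this]
    exact add_mem hx hy
lemma Dmul0 (n : ℕ) (r s : Fin (n + 1)) (h : r ≠ s) (b c : B) :
    Ideal.Quotient.mk (Jsq R B n) (dd R B n r s b)
      * Ideal.Quotient.mk (Jsq R B n) (dd R B n r s c) = 0 := by
  rw [← _root_.map_mul, Ideal.Quotient.eq_zero_iff_mem]
  exact mul_dd_mem_Jsq R B n r s h b c

lemma cross (n : ℕ) (r s : Fin (n + 1)) (hr : r ≠ 0) (hs : s ≠ 0) (hrs : r ≠ s) (a c : B) :
    Ideal.Quotient.mk (Jsq R B n) (dd R B n 0 r a)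
        * Ideal.Quotient.mk (Jsq R B n) (dd R B n 0 s c)
      = -(Ideal.Quotient.mk (Jsq R B n) (dd R B n 0 s a)
        * Ideal.Quotient.mk (Jsq R B n) (dd R B n 0 r c)) := by
  have hx : dd R B n 0 r a * dd R B n 0 s c + dd R B n 0 s a * dd R B n 0 r c
      = (dd R B n 0 r a * dd R B n 0 r c + dd R B n 0 s a * dd R B n 0 s c)
        - dd R B n r s a * dd R B n r s c := by
    rw [dd_cocycle R B n r s 0 a, dd_cocycle R B n r s 0 c]; ring
  have hmem : dd R B n 0 r a * dd R B n 0 s c + dd R B n 0 s a * dd R B n 0 r c ∈ Jsq R B n := by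
    rw [hx]
    exact sub_mem (add_mem (mul_dd_mem_Jsq R B n 0 r (Ne.symm hr) a c)
      (mul_dd_mem_Jsq R B n 0 s (Ne.symm hs) a c)) (mul_dd_mem_Jsq R B n r s hrs a c)
  have h0 : Ideal.Quotient.mk (Jsq R B n) (dd R B n 0 r a)
        * Ideal.Quotient.mk (Jsq R B n) (dd R B n 0 s c)
      + Ideal.Quotient.mk (Jsq R B n) (dd R B n 0 s a)
        * Ideal.Quotient.mk (Jsq R B n) (dd R B n 0 r c) = 0 := by
    rw [← _root_.map_mul, ← _root_.map_mul, ← _root_.map_add, Ideal.Quotient.eq_zero_iff_mem]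
    exact hmem
  exact eq_neg_of_add_eq_zero_left h0

lemma expandB (n : ℕ) (s : Fin (n + 1)) (hs : s ≠ 0) (c : B) (b : Fin (n + 1) → B)
    (t : Finset (Fin (n + 1))) :
    Ideal.Quotient.mk (Jsq R B n) (dd R B n 0 s c)
        * ∏ i ∈ t, (Ideal.Quotient.mk (Jsq R B n) (dd R B n 0 i (b i))
            - Ideal.Quotient.mk (Jsq R B n) (dd R B n 0 s (b i)))
      = Ideal.Quotient.mk (Jsq R B n) (dd R B n 0 s c)
        * ∏ i ∈ t, Ideal.Quotient.mk (Jsq R B n) (dd R B n 0 i (b i)) := by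
  classical
  induction t using Finset.induction_on with
  | empty => simp
  | @insert j t hj ih =>
    rw [Finset.prod_insert hj, Finset.prod_insert hj]
    have h0 : Ideal.Quotient.mk (Jsq R B n) (dd R B n 0 s c)
        * Ideal.Quotient.mk (Jsq R B n) (dd R B n 0 s (b j)) = 0 :=
      Dmul0 R B n 0 s (Ne.symm hs) c (b j)
    linear_combination (Ideal.Quotient.mk (Jsq R B n) (dd R B n 0 j (b j))) * ih
      - (∏ i ∈ t, (Ideal.Quotient.mk (Jsq R B n) (dd R B n 0 i (b i))
          - Ideal.Quotient.mk (Jsq R B n) (dd R B n 0 s (b i)))) * h0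

lemma prod_swap0 (n : ℕ) (s : Fin (n + 1)) (hs : s ≠ 0) (b : Fin (n + 1) → B) :
    ∏ i ∈ Finset.Ioi (0 : Fin (n + 1)),
        Ideal.Quotient.mk (Jsq R B n) (dd R B n (Equiv.swap 0 s 0) (Equiv.swap 0 s i) (b i))
      = - ∏ i ∈ Finset.Ioi (0 : Fin (n + 1)),
          Ideal.Quotient.mk (Jsq R B n) (dd R B n 0 i (b i)) := by
  classical
  have hsmem : s ∈ Finset.Ioi (0 : Fin (n + 1)) :=
    Finset.mem_Ioi.mpr (Fin.pos_iff_ne_zero.mpr hs)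
  rw [← Finset.mul_prod_erase _ _ hsmem, ← Finset.mul_prod_erase _ _ hsmem]
  rw [Equiv.swap_apply_left, Equiv.swap_apply_right]
  have hterm : Ideal.Quotient.mk (Jsq R B n) (dd R B n s 0 (b s))
      = -Ideal.Quotient.mk (Jsq R B n) (dd R B n 0 s (b s)) := by
    rw [dd_symm, map_neg]
  have hrest : ∏ i ∈ (Finset.Ioi (0 : Fin (n + 1))).erase s,
        Ideal.Quotient.mk (Jsq R B n) (dd R B n s (Equiv.swap 0 s i) (b i))
      = ∏ i ∈ (Finset.Ioi (0 : Fin (n + 1))).erase s,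
          (Ideal.Quotient.mk (Jsq R B n) (dd R B n 0 i (b i))
            - Ideal.Quotient.mk (Jsq R B n) (dd R B n 0 s (b i))) := by
    refine Finset.prod_congr rfl fun i hi => ?_
    have his : i ≠ s := (Finset.mem_erase.mp hi).1
    have hi0 : i ≠ 0 := Fin.pos_iff_ne_zero.mp (Finset.mem_Ioi.mp (Finset.mem_erase.mp hi).2)
    rw [Equiv.swap_apply_of_ne_of_ne hi0 his, dd_cocycle R B n s i 0 (b i), map_sub]
  rw [hterm, hrest]
  linear_combination -(expandB R B n s hs (b s) b ((Finset.Ioi (0 : Fin (n + 1))).erase s))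

lemma prod_swap (n : ℕ) (r s : Fin (n + 1)) (hrs : r ≠ s) (b : Fin (n + 1) → B) :
    ∏ i ∈ Finset.Ioi (0 : Fin (n + 1)),
        Ideal.Quotient.mk (Jsq R B n) (dd R B n (Equiv.swap r s 0) (Equiv.swap r s i) (b i))
      = - ∏ i ∈ Finset.Ioi (0 : Fin (n + 1)),
          Ideal.Quotient.mk (Jsq R B n) (dd R B n 0 i (b i)) := by
  classical
  by_cases hr : r = 0
  · subst hr
    exact prod_swap0 R B n s (Ne.symm hrs) b
  by_cases hs : s = 0
  · subst hs
    rw [Equiv.swap_comm]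
    exact prod_swap0 R B n r hr b
  -- both nonzero; swap fixes 0
  have h0 : Equiv.swap r s 0 = 0 :=
    Equiv.swap_apply_of_ne_of_ne (Ne.symm hr) (Ne.symm hs)
  rw [h0]
  have hreix : ∏ i ∈ Finset.Ioi (0 : Fin (n + 1)),
        Ideal.Quotient.mk (Jsq R B n) (dd R B n 0 (Equiv.swap r s i) (b i))
      = ∏ j ∈ Finset.Ioi (0 : Fin (n + 1)),
          Ideal.Quotient.mk (Jsq R B n) (dd R B n 0 j (b (Equiv.swap r s j))) := by
    refine Finset.prod_equiv (Equiv.swap r s) (fun i => ?_) (fun i hi => ?_)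
    · simp only [Finset.mem_Ioi, Fin.pos_iff_ne_zero]
      constructor
      · intro hi hc
        exact hi (by rw [← h0] at hc; exact (Equiv.swap r s).injective hc ▸ rfl)
      · intro hi hc
        exact hi (by rw [hc, h0])
    · rw [Equiv.swap_apply_self]
  rw [hreix]
  have hrmem : r ∈ Finset.Ioi (0 : Fin (n + 1)) :=
    Finset.mem_Ioi.mpr (Fin.pos_iff_ne_zero.mpr hr)
  have hsmem : s ∈ (Finset.Ioi (0 : Fin (n + 1))).erase r :=
    Finset.mem_erase.mpr ⟨Ne.symm hrs, Finset.mem_Ioi.mpr (Fin.pos_iff_ne_zero.mpr hs)⟩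
  rw [← Finset.mul_prod_erase _ _ hrmem, ← Finset.mul_prod_erase _ _ hsmem,
    ← Finset.mul_prod_erase _ (fun i => Ideal.Quotient.mk (Jsq R B n) (dd R B n 0 i (b i))) hrmem,
    ← Finset.mul_prod_erase _ _ hsmem]
  have hM : ∏ i ∈ ((Finset.Ioi (0 : Fin (n + 1))).erase r).erase s,
        Ideal.Quotient.mk (Jsq R B n) (dd R B n 0 i (b (Equiv.swap r s i)))
      = ∏ i ∈ ((Finset.Ioi (0 : Fin (n + 1))).erase r).erase s,
          Ideal.Quotient.mk (Jsq R B n) (dd R B n 0 i (b i)) := by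
    refine Finset.prod_congr rfl fun i hi => ?_
    have his : i ≠ s := (Finset.mem_erase.mp hi).1
    have hir : i ≠ r := (Finset.mem_erase.mp (Finset.mem_erase.mp hi).2).1
    rw [Equiv.swap_apply_of_ne_of_ne hir his]
  rw [hM, Equiv.swap_apply_left, Equiv.swap_apply_right]
  have hcross := cross R B n r s hr hs hrs (b s) (b r)
  linear_combination (∏ i ∈ ((Finset.Ioi (0 : Fin (n + 1))).erase r).erase s,
    Ideal.Quotient.mk (Jsq R B n) (dd R B n 0 i (b i))) * hcross
lemma PP_eq_span (n : ℕ) : PP R B n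
    = Ideal.span (∏ i ∈ Finset.Ioi (0 : Fin (n + 1)), {x | ∃ b : B, x = dd R B n 0 i b}) := by
  rw [PP]
  simp only [Jrs]
  exact Ideal.prod_span _ _

lemma rho_swap_PP (n : ℕ) (r s : Fin (n + 1)) (hrs : r ≠ s) :
    ∀ x ∈ PP R B n, Ideal.Quotient.mk (Jsq R B n) (rho R B n (Equiv.swap r s) x)
      = - Ideal.Quotient.mk (Jsq R B n) x := by
  classical
  intro x hx
  rw [PP_eq_span] at hx
  induction hx using Submodule.span_induction with
  | mem x hxm =>
    rw [Set.mem_finset_prod] at hxm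
    obtain ⟨g, hg, hprod⟩ := hxm
    set b : Fin (n + 1) → B := fun i =>
      if h : ∃ c : B, g i = dd R B n 0 i c then h.choose else 1 with hb
    have hgb : ∀ i ∈ Finset.Ioi (0 : Fin (n + 1)), g i = dd R B n 0 i (b i) := by
      intro i hi
      have h : ∃ c : B, g i = dd R B n 0 i c := hg hi
      rw [hb]
      simp only [dif_pos h]
      exact h.choose_spec
    have hxeq : x = ∏ i ∈ Finset.Ioi (0 : Fin (n + 1)), dd R B n 0 i (b i) := by
      rw [← hprod]
      exact Finset.prod_congr rfl hgb
    have h1 : Ideal.Quotient.mk (Jsq R B n) (rho R B n (Equiv.swap r s) x)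
        = ∏ i ∈ Finset.Ioi (0 : Fin (n + 1)), Ideal.Quotient.mk (Jsq R B n)
            (dd R B n (Equiv.swap r s 0) (Equiv.swap r s i) (b i)) := by
      rw [hxeq, _root_.map_prod, _root_.map_prod]
      exact Finset.prod_congr rfl fun i _ => by rw [rho_dd]
    have h2 : Ideal.Quotient.mk (Jsq R B n) x
        = ∏ i ∈ Finset.Ioi (0 : Fin (n + 1)),
            Ideal.Quotient.mk (Jsq R B n) (dd R B n 0 i (b i)) := by
      rw [hxeq, _root_.map_prod]
    rw [h1, h2]
    exact prod_swap R B n r s hrs b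
  | zero => simp
  | add x y hxs hys ihx ihy => rw [map_add, map_add, ihx, ihy, map_add]; ring
  | smul a x hxs ih =>
    have hxP : x ∈ PP R B n := by rw [PP_eq_span]; exact hxs
    have hsum : rho R B n (Equiv.swap r s) x + x ∈ Jsq R B n := by
      rw [← Ideal.Quotient.eq_zero_iff_mem, map_add, ih]; ring
    have hmem : rho R B n (Equiv.swap r s) (a • x) + a • x ∈ Jsq R B n := by
      have hdecomp : rho R B n (Equiv.swap r s) (a • x) + a • x
          = (rho R B n (Equiv.swap r s) a - a) * (rho R B n (Equiv.swap r s) x + x)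
            - (rho R B n (Equiv.swap r s) a - a) * x
            + a * (rho R B n (Equiv.swap r s) x + x) := by
        simp only [smul_eq_mul, _root_.map_mul]; ring
      rw [hdecomp]
      exact add_mem (sub_mem (Ideal.mul_mem_left _ _ hsum)
        (Jrs_mul_PP_le R B n r s hrs
          (Ideal.mul_mem_mul (rho_swap_sub_mem R B n r s hrs a) hxP)))
        (Ideal.mul_mem_left _ _ hsum)
    have h0 : Ideal.Quotient.mk (Jsq R B n) (rho R B n (Equiv.swap r s) (a • x))
        + Ideal.Quotient.mk (Jsq R B n) (a • x) = 0 := by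
      rw [← map_add, Ideal.Quotient.eq_zero_iff_mem]
      exact hmem
    exact eq_neg_of_add_eq_zero_left h0

lemma PsiW_eq (n : ℕ) :
    PsiW R B n = (PP R B n).map (Ideal.Quotient.mk (Jsq R B n)) := by
  rw [PsiW, PP]
  simp only [Jt, ← Ideal.mapHom_apply]
  rw [map_prod]

lemma rho_swap_Psi (n : ℕ) (r s : Fin (n + 1)) (hrs : r ≠ s) :
    ∀ y : TT R B n, Ideal.Quotient.mk (Jsq R B n) y ∈ PsiW R B n →
      Ideal.Quotient.mk (Jsq R B n) (rho R B n (Equiv.swap r s) y)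
        = - Ideal.Quotient.mk (Jsq R B n) y := by
  intro y hy
  rw [PsiW_eq] at hy
  have hcm : y ∈ PP R B n ⊔ Jsq R B n := by
    have h1 : y ∈ Ideal.comap (Ideal.Quotient.mk (Jsq R B n))
        ((PP R B n).map (Ideal.Quotient.mk (Jsq R B n))) := Ideal.mem_comap.mpr hy
    rwa [Ideal.comap_map_of_surjective _ Ideal.Quotient.mk_surjective,
      ← RingHom.ker_eq_comap_bot, Ideal.mk_ker] at h1
  obtain ⟨p, hp, j, hj, rfl⟩ := Submodule.mem_sup.mp hcm
  have hj0 : Ideal.Quotient.mk (Jsq R B n) j = 0 := Ideal.Quotient.eq_zero_iff_mem.mpr hj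
  have hrj : Ideal.Quotient.mk (Jsq R B n) (rho R B n (Equiv.swap r s) j) = 0 :=
    Ideal.Quotient.eq_zero_iff_mem.mpr (rho_Jsq R B n _ j hj)
  rw [map_add, map_add, map_add, hj0, hrj, rho_swap_PP R B n r s hrs p hp]
  ring

lemma sign_lemma (n : ℕ) (σ : Equiv.Perm (Fin (n + 1))) :
    ∀ x : TT R B n, Ideal.Quotient.mk (Jsq R B n) x ∈ PsiW R B n →
      Ideal.Quotient.mk (Jsq R B n) (rho R B n σ x)
        = (Equiv.Perm.sign σ : ℤ) • Ideal.Quotient.mk (Jsq R B n) x := by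
  refine Equiv.Perm.swap_induction_on σ ?_ ?_
  · intro x hx
    rw [rho_one_apply]
    simp
  · intro f a b hab ih x hx
    rw [rho_mul_apply]
    have h1 := ih x hx
    have hmem : Ideal.Quotient.mk (Jsq R B n) (rho R B n f x) ∈ PsiW R B n := by
      rw [h1, zsmul_eq_mul]
      exact Ideal.mul_mem_left _ _ hx
    have h2 := rho_swap_Psi R B n a b hab (rho R B n f x) hmem
    rw [h2, h1, Equiv.Perm.sign_mul, Equiv.Perm.sign_swap hab]
    simp [neg_smul]
/-- the symmetric group `S_{n+1}` acts on `T_n` by `R`-algebra automorphisms,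
`σ` sending an elementary tensor `b₀ ⊗ ⋯ ⊗ bₙ` to the tensor whose `i`-th entry is
`b_{σ⁻¹(i)}`.  This action preserves `J^{(2)}_{0n}`, hence descends to `T_n/J^{(2)}_{0n}`,
and on the ideal `Ψ^{(n)}` it is given by the sign character. -/
theorem stmt9 (n : ℕ) (hn : 1 ≤ n) (σ : Equiv.Perm (Fin (n + 1))) :
    ∃ ρ : TT R B n ≃ₐ[R] TT R B n,
      (∀ f : Fin (n + 1) → B, ρ (tprod R f) = tprod R (fun i => f (σ⁻¹ i))) ∧
      (∀ x ∈ Jsq R B n, ρ x ∈ Jsq R B n) ∧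
      (∀ x : TT R B n, Ideal.Quotient.mk (Jsq R B n) x ∈ PsiW R B n →
        Ideal.Quotient.mk (Jsq R B n) (ρ x)
          = (Equiv.Perm.sign σ : ℤ) • Ideal.Quotient.mk (Jsq R B n) x) :=
  ⟨rho R B n σ, rho_tprod R B n σ, rho_Jsq R B n σ, sign_lemma R B n σ⟩

end
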